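/- Let F be a downward closed decomposable family and G the family after the legal merge merge(S,x,y), with Z = S∪{x,y}. Then the reduced family R(G;S) is obtained from R(F;S) by merging into a single set the (distinct) members of R(F;S) containing x and containing y respectively. -/

import Mathlib

open scoped Classical

variable {A : Type*} [Fintype A] [DecidableEq A]

/-- A family of itemsets is downward closed if it is closed under taking subsets. -/
def DownwardClosed (F : Finset (Finset A)) : Prop :=
  ∀ X ∈ F, ∀ Y ⊆ X, Y ∈ F

/-- The maximal itemsets of a family. -/
def maximalSets (F : Finset (Finset A)) : Finset (Finset A) :=
  F.filter fun X => ∀ Y ∈ F, X ⊆ Y → X = Y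

/-- A junction tree for a family `F`: a tree on the maximal itemsets of `F` such that
for any two nodes sharing an item `a`, every node on the (unique) path between them
contains `a` (running intersection property). -/
def IsJunctionTree (F : Finset (Finset A))
    (G : SimpleGraph {X // X ∈ maximalSets F}) : Prop :=
  G.IsTree ∧
    ∀ (X Y : {X // X ∈ maximalSets F}) (a : A), a ∈ X.1 → a ∈ Y.1 →
      ∀ (p : G.Walk X Y), p.IsPath → ∀ Z ∈ p.support, a ∈ Z.1

/-- A family is decomposable if it admits a junction tree. -/
def Decomposable (F : Finset (Finset A)) : Prop :=
  ∃ G : SimpleGraph {X // X ∈ maximalSets F}, IsJunctionTree F G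

/-- The collection {X − S : X ∈ max(F), S ⊊ X}. -/
def baseFam (F : Finset (Finset A)) (S : Finset A) : Finset (Finset A) :=
  ((maximalSets F).filter fun X => S ⊂ X).image fun X => X \ S

/-- The union of the connected component of `U` in the intersection graph on `baseFam F S`. -/
noncomputable def component (F : Finset (Finset A)) (S U : Finset A) : Finset A :=
  ((baseFam F S).filter fun V =>
      Relation.ReflTransGen
        (fun P Q => P ∈ baseFam F S ∧ Q ∈ baseFam F S ∧ (P ∩ Q).Nonempty) U V).sup id

/-- The reduced family R(F;S): obtained from {X − S : X ∈ max(F), S ⊊ X} by repeatedly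
replacing intersecting members by their union until all members are pairwise disjoint;
equivalently, the unions of the connected components of the intersection graph. -/
noncomputable def reducedFamily (F : Finset (Finset A)) (S : Finset A) : Set (Finset A) :=
  {Z | ∃ U ∈ baseFam F S, Z = component F S U}

/-! The reduced family is the set of unions of connected components of the intersection graph
on the base family `B = {X \ S}`. The merge turns `B` into `B'`, which contains `T = Z \ S = {x, y}`
(as `V ≠ W`, no maximal set of `F` contains `Z`, so `Z` becomes maximal), and otherwise only loses
members of `B` lying inside `T`. Those are absorbed by `T`, so passing from `B` to `B'` joins the
two components meeting `T`, namely `V` and `W`, and leaves every other component unchanged. -/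

open Relation Finset

section IntersectionGraph

variable {α : Type*} [DecidableEq α] {𝓑 𝓑' : Finset (Finset α)} {C D P T U U' V W : Finset α}
  {a : α}

def Overlaps (𝓑 : Finset (Finset α)) (P Q : Finset α) : Prop :=
  P ∈ 𝓑 ∧ Q ∈ 𝓑 ∧ (P ∩ Q).Nonempty

instance : Std.Symm (Overlaps 𝓑) :=
  ⟨fun _ _ ⟨hP, hQ, h⟩ => ⟨hQ, hP, by rwa [inter_comm]⟩⟩

noncomputable def componentUnion (𝓑 : Finset (Finset α)) (U : Finset α) : Finset α :=
  (𝓑.filter fun V => ReflTransGen (Overlaps 𝓑) U V).sup id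

def componentUnions (𝓑 : Finset (Finset α)) : Set (Finset α) :=
  {C | ∃ U ∈ 𝓑, C = componentUnion 𝓑 U}

theorem mem_componentUnion :
    a ∈ componentUnion 𝓑 U ↔ ∃ P ∈ 𝓑, ReflTransGen (Overlaps 𝓑) U P ∧ a ∈ P := by
  simp [componentUnion, mem_sup, and_assoc]

theorem subset_componentUnion (hP : P ∈ 𝓑) (h : ReflTransGen (Overlaps 𝓑) U P) :
    P ⊆ componentUnion 𝓑 U :=
  fun _ ha => mem_componentUnion.2 ⟨P, hP, h, ha⟩

theorem self_subset_componentUnion (hU : U ∈ 𝓑) : U ⊆ componentUnion 𝓑 U :=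
  subset_componentUnion hU .refl

theorem reflTransGen_of_mem_componentUnion (hP : P ∈ 𝓑) (haP : a ∈ P)
    (ha : a ∈ componentUnion 𝓑 U) : ReflTransGen (Overlaps 𝓑) U P := by
  obtain ⟨Q, hQ, hUQ, haQ⟩ := mem_componentUnion.1 ha
  exact hUQ.tail ⟨hQ, hP, a, mem_inter.2 ⟨haQ, haP⟩⟩

theorem componentUnion_eq_of_reflTransGen (h : ReflTransGen (Overlaps 𝓑) U U') :
    componentUnion 𝓑 U = componentUnion 𝓑 U' := by
  ext a
  simp only [mem_componentUnion]
  exact ⟨fun ⟨P, hP, hUP, ha⟩ => ⟨P, hP, (Std.Symm.symm _ _ h).trans hUP, ha⟩,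
    fun ⟨P, hP, hUP, ha⟩ => ⟨P, hP, h.trans hUP, ha⟩⟩

theorem componentUnion_eq_of_mem (h : a ∈ componentUnion 𝓑 U) (h' : a ∈ componentUnion 𝓑 U') :
    componentUnion 𝓑 U = componentUnion 𝓑 U' := by
  obtain ⟨P, hP, hUP, haP⟩ := mem_componentUnion.1 h
  exact (componentUnion_eq_of_reflTransGen hUP).trans
    (componentUnion_eq_of_reflTransGen (reflTransGen_of_mem_componentUnion hP haP h')).symm

theorem eq_of_mem_componentUnions (hC : C ∈ componentUnions 𝓑) (hD : D ∈ componentUnions 𝓑)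
    (haC : a ∈ C) (haD : a ∈ D) : C = D := by
  obtain ⟨U, -, rfl⟩ := hC
  obtain ⟨U', -, rfl⟩ := hD
  exact componentUnion_eq_of_mem haC haD

theorem subset_of_mem_componentUnions (hC : C ∈ componentUnions 𝓑) (hP : P ∈ 𝓑) (haP : a ∈ P)
    (haC : a ∈ C) : P ⊆ C := by
  obtain ⟨U, -, rfl⟩ := hC
  exact subset_componentUnion hP (reflTransGen_of_mem_componentUnion hP haP haC)

theorem componentUnion_subset_of_closed (hU : U ⊆ C) (hC : ∀ Q ∈ 𝓑, ¬Disjoint Q C → Q ⊆ C) :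
    componentUnion 𝓑 U ⊆ C := by
  suffices ∀ P, ReflTransGen (Overlaps 𝓑) U P → P ⊆ C by
    intro a ha
    obtain ⟨P, -, hUP, haP⟩ := mem_componentUnion.1 ha
    exact this P hUP haP
  intro P hUP
  induction hUP with
  | refl => exact hU
  | tail _ hPQ ih =>
    obtain ⟨-, hQ, a, ha⟩ := hPQ
    rw [mem_inter] at ha
    exact hC _ hQ (not_disjoint_iff.2 ⟨a, ha.2, ih ha.1⟩)

theorem componentUnion_subset_componentUnion (h : ∀ P ∈ 𝓑, ∃ P' ∈ 𝓑', P ⊆ P')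
    (hUU' : U ⊆ U') (hU' : U' ∈ 𝓑') : componentUnion 𝓑 U ⊆ componentUnion 𝓑' U' := by
  suffices ∀ P, ReflTransGen (Overlaps 𝓑) U P →
      ∃ P' ∈ 𝓑', ReflTransGen (Overlaps 𝓑') U' P' ∧ P ⊆ P' by
    intro a ha
    obtain ⟨P, -, hUP, haP⟩ := mem_componentUnion.1 ha
    obtain ⟨P', hP', hUP', hPP'⟩ := this P hUP
    exact subset_componentUnion hP' hUP' (hPP' haP)
  intro P hUP
  induction hUP with
  | refl => exact ⟨U', hU', .refl, hUU'⟩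
  | tail _ hPQ ih =>
    obtain ⟨P', hP', hUP', hPP'⟩ := ih
    obtain ⟨-, hQ, hPQ⟩ := hPQ
    obtain ⟨Q', hQ', hQQ'⟩ := h _ hQ
    exact ⟨Q', hQ', hUP'.tail ⟨hP', hQ', hPQ.mono (inter_subset_inter hPP' hQQ')⟩, hQQ'⟩

theorem subset_componentUnion_of_not_disjoint (h : ∀ P ∈ 𝓑, ∃ P' ∈ 𝓑', P ⊆ P') (hT : T ∈ 𝓑')
    (hC : C ∈ componentUnions 𝓑) (hTC : ¬Disjoint T C) : C ⊆ componentUnion 𝓑' T := by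
  obtain ⟨U, hU, rfl⟩ := hC
  obtain ⟨a, haT, haC⟩ := not_disjoint_iff.1 hTC
  obtain ⟨U', hU', hUU'⟩ := h U hU
  have hsub := componentUnion_subset_componentUnion h hUU' hU'
  rwa [componentUnion_eq_of_mem (hsub haC) (self_subset_componentUnion hT haT)] at hsub

end IntersectionGraph

section Merge

variable {α : Type*} {𝓑 𝓑' : Finset (Finset α)} {P T V W : Finset α}

structure IsMergeAlong (𝓑 𝓑' : Finset (Finset α)) (T : Finset α) : Prop where
  mem : T ∈ 𝓑'
  eq_or_mem : ∀ P ∈ 𝓑', P = T ∨ P ∈ 𝓑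
  mem_or_subset : ∀ P ∈ 𝓑, P ∈ 𝓑' ∨ (P ⊆ T ∧ P.Nonempty)

namespace IsMergeAlong

theorem exists_superset (h : IsMergeAlong 𝓑 𝓑' T) : ∀ P ∈ 𝓑, ∃ P' ∈ 𝓑', P ⊆ P' := fun P hP =>
  (h.mem_or_subset P hP).elim (fun hP' => ⟨P, hP', subset_rfl⟩) fun hPT => ⟨T, h.mem, hPT.1⟩

variable [DecidableEq α]

theorem componentUnion_eq_of_disjoint (h : IsMergeAlong 𝓑 𝓑' T) (hP : P ∈ 𝓑)
    (hPT : Disjoint (componentUnion 𝓑 P) T) :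
    P ∈ 𝓑' ∧ componentUnion 𝓑' P = componentUnion 𝓑 P := by
  have hP' : P ∈ 𝓑' := (h.mem_or_subset P hP).resolve_right fun ⟨hPT', a, ha⟩ =>
    disjoint_left.1 hPT (self_subset_componentUnion hP ha) (hPT' ha)
  refine ⟨hP', subset_antisymm ?_ ?_⟩
  · refine componentUnion_subset_of_closed (self_subset_componentUnion hP) fun Q hQ hQP => ?_
    rcases h.eq_or_mem Q hQ with rfl | hQ𝓑
    · exact absurd hPT.symm hQP
    · obtain ⟨a, haQ, haP⟩ := not_disjoint_iff.1 hQP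
      exact subset_of_mem_componentUnions ⟨P, hP, rfl⟩ hQ𝓑 haQ haP
  · exact componentUnion_subset_componentUnion h.exists_superset subset_rfl hP'

theorem componentUnion_eq_union (h : IsMergeAlong 𝓑 𝓑' T) (hV : V ∈ componentUnions 𝓑)
    (hW : W ∈ componentUnions 𝓑) (hTVW : T ⊆ V ∪ W) (hTV : ¬Disjoint T V)
    (hTW : ¬Disjoint T W) : componentUnion 𝓑' T = V ∪ W := by
  refine subset_antisymm (componentUnion_subset_of_closed hTVW fun Q hQ hQVW => ?_)
    (union_subset (subset_componentUnion_of_not_disjoint h.exists_superset h.mem hV hTV)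
      (subset_componentUnion_of_not_disjoint h.exists_superset h.mem hW hTW))
  rcases h.eq_or_mem Q hQ with rfl | hQ𝓑
  · exact hTVW
  obtain ⟨a, haQ, haVW⟩ := not_disjoint_iff.1 hQVW
  rcases mem_union.1 haVW with haV | haW
  · exact (subset_of_mem_componentUnions hV hQ𝓑 haQ haV).trans subset_union_left
  · exact (subset_of_mem_componentUnions hW hQ𝓑 haQ haW).trans subset_union_right

theorem componentUnions_eq (h : IsMergeAlong 𝓑 𝓑' T) (hV : V ∈ componentUnions 𝓑)
    (hW : W ∈ componentUnions 𝓑) (hTVW : T ⊆ V ∪ W) (hTV : ¬Disjoint T V)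
    (hTW : ¬Disjoint T W) :
    componentUnions 𝓑' = insert (V ∪ W) (componentUnions 𝓑 \ {V, W}) := by
  have hmerged := h.componentUnion_eq_union hV hW hTVW hTV hTW
  have hdisjoint : ∀ C ∈ componentUnions 𝓑, C ∉ ({V, W} : Set _) ↔ Disjoint C T := by
    intro C hC
    constructor
    · intro hCVW
      refine disjoint_right.2 fun a haT haC => hCVW ?_
      rcases mem_union.1 (hTVW haT) with haV | haW
      · exact .inl (eq_of_mem_componentUnions hC hV haC haV)
      · exact .inr (eq_of_mem_componentUnions hC hW haC haW)
    · rintro hCT (rfl | rfl)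
      exacts [hTV hCT.symm, hTW hCT.symm]
  ext C
  constructor
  · rintro ⟨P, hP, rfl⟩
    by_cases hPT : Disjoint (componentUnion 𝓑' P) T
    · have hTne : T.Nonempty := (not_disjoint_iff_nonempty_inter.1 hTV).mono inter_subset_left
      have hP𝓑 : P ∈ 𝓑 := (h.eq_or_mem P hP).resolve_left fun hPT' => by
        subst hPT'
        exact hTne.ne_empty (disjoint_self.1 (hPT.mono_left (self_subset_componentUnion hP)))
      have hPT'' : Disjoint (componentUnion 𝓑 P) T :=
        hPT.mono_left (componentUnion_subset_componentUnion h.exists_superset subset_rfl hP)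
      rw [(h.componentUnion_eq_of_disjoint hP𝓑 hPT'').2]
      exact .inr ⟨⟨P, hP𝓑, rfl⟩, (hdisjoint _ ⟨P, hP𝓑, rfl⟩).2 hPT''⟩
    · obtain ⟨a, haP, haT⟩ := not_disjoint_iff.1 hPT
      rw [componentUnion_eq_of_mem haP (self_subset_componentUnion h.mem haT), hmerged]
      exact .inl rfl
  · rintro (rfl | ⟨⟨P, hP, rfl⟩, hPVW⟩)
    · exact ⟨T, h.mem, hmerged.symm⟩
    · obtain ⟨hP', heq⟩ := h.componentUnion_eq_of_disjoint hP ((hdisjoint _ ⟨P, hP, rfl⟩).1 hPVW)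
      exact ⟨P, hP', heq.symm⟩

end IsMergeAlong

end Merge

section MaximalSets

variable {F : Finset (Finset A)} {S X Y Z P : Finset A}

theorem mem_maximalSets : X ∈ maximalSets F ↔ X ∈ F ∧ ∀ Y ∈ F, X ⊆ Y → X = Y :=
  mem_filter

theorem mem_baseFam : P ∈ baseFam F S ↔ ∃ X ∈ maximalSets F, S ⊂ X ∧ X \ S = P := by
  simp [baseFam, and_assoc]

theorem exists_mem_maximalSets_superset (hY : Y ∈ F) : ∃ X ∈ maximalSets F, Y ⊆ X := by
  obtain ⟨X, hYX, hX⟩ := F.exists_le_maximal hY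
  exact ⟨X, mem_maximalSets.2 ⟨hX.prop, fun X' hX' hXX' => hX.eq_of_le hX' hXX'⟩, hYX⟩

theorem mem_maximalSets_union_powerset_self (hZ : ∀ X ∈ maximalSets F, ¬Z ⊂ X) :
    Z ∈ maximalSets (F ∪ Z.powerset) := by
  refine mem_maximalSets.2 ⟨mem_union_right _ (mem_powerset_self Z), fun Y hY hZY => ?_⟩
  rcases mem_union.1 hY with hYF | hYZ
  · obtain ⟨X, hX, hYX⟩ := exists_mem_maximalSets_superset hYF
    have hZX : Z = X := (hZY.trans hYX).eq_of_not_ssubset (hZ X hX)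
    exact subset_antisymm hZY (hZX ▸ hYX)
  · exact subset_antisymm hZY (mem_powerset.1 hYZ)

theorem mem_maximalSets_union_powerset (hX : X ∈ maximalSets F) (hXZ : ¬X ⊆ Z) :
    X ∈ maximalSets (F ∪ Z.powerset) := by
  rw [mem_maximalSets] at hX ⊢
  refine ⟨mem_union_left _ hX.1, fun Y hY hXY => ?_⟩
  rcases mem_union.1 hY with hYF | hYZ
  · exact hX.2 Y hYF hXY
  · exact absurd (hXY.trans (mem_powerset.1 hYZ)) hXZ

theorem baseFam_union_powerset_cases (hP : P ∈ baseFam (F ∪ Z.powerset) S) :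
    P = Z \ S ∨ P ∈ baseFam F S := by
  obtain ⟨X, hX, hSX, rfl⟩ := mem_baseFam.1 hP
  rw [mem_maximalSets] at hX
  by_cases hXZ : X ⊆ Z
  · exact .inl (by rw [hX.2 Z (mem_union_right _ (mem_powerset_self Z)) hXZ])
  · have hXF : X ∈ F := (mem_union.1 hX.1).resolve_right (mt mem_powerset.1 hXZ)
    exact .inr (mem_baseFam.2 ⟨X, mem_maximalSets.2
      ⟨hXF, fun Y hY => hX.2 Y (mem_union_left _ hY)⟩, hSX, rfl⟩)

theorem baseFam_cases_of_union_powerset (hP : P ∈ baseFam F S) :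
    P ∈ baseFam (F ∪ Z.powerset) S ∨ (P ⊆ Z \ S ∧ P.Nonempty) := by
  obtain ⟨X, hX, hSX, rfl⟩ := mem_baseFam.1 hP
  by_cases hXZ : X ⊆ Z
  · exact .inr ⟨sdiff_subset_sdiff hXZ subset_rfl, sdiff_nonempty.2 hSX.not_subset⟩
  · exact .inl (mem_baseFam.2 ⟨X, mem_maximalSets_union_powerset hX hXZ, hSX, rfl⟩)

theorem isMergeAlong_baseFam_union_powerset (hSZ : S ⊂ Z)
    (hZ : ∀ X ∈ maximalSets F, ¬Z ⊂ X) :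
    IsMergeAlong (baseFam F S) (baseFam (F ∪ Z.powerset) S) (Z \ S) where
  mem := mem_baseFam.2 ⟨Z, mem_maximalSets_union_powerset_self hZ, hSZ, rfl⟩
  eq_or_mem _ := baseFam_union_powerset_cases
  mem_or_subset _ := baseFam_cases_of_union_powerset

end MaximalSets

theorem reducedFamily_eq_componentUnions (F : Finset (Finset A)) (S : Finset A) :
    reducedFamily F S = componentUnions (baseFam F S) :=
  rfl

theorem merge_updates_reduced_family_general (F : Finset (Finset A))
    (S : Finset A) (x y : A) (hx : x ∉ S) (hy : y ∉ S)
    (V W : Finset A) (hV : V ∈ reducedFamily F S) (hW : W ∈ reducedFamily F S)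
    (hVW : V ≠ W) (hxV : x ∈ V) (hyW : y ∈ W)
    (G' : Finset (Finset A)) (hG' : G' = F ∪ (insert x (insert y S)).powerset) :
    reducedFamily G' S = insert (V ∪ W) (reducedFamily F S \ {V, W}) := by
  subst hG'
  set Z := insert x (insert y S)
  rw [reducedFamily_eq_componentUnions] at hV hW ⊢
  have hxZ : x ∈ Z \ S := by simp [Z, hx]
  have hyZ : y ∈ Z \ S := by simp [Z, hy]
  have hSZ : S ⊂ Z := (ssubset_insert hy).trans_subset (subset_insert _ _)
  have hZVW : Z \ S ⊆ V ∪ W := by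
    intro a ha
    simp only [Z, mem_sdiff, mem_insert] at ha
    obtain ⟨rfl | rfl | haS, haS'⟩ := ha
    exacts [mem_union_left _ hxV, mem_union_right _ hyW, absurd haS haS']
  have hZ : ∀ X ∈ maximalSets F, ¬Z ⊂ X := by
    intro X hX hZX
    have hXS : X \ S ∈ baseFam F S := mem_baseFam.2 ⟨X, hX, hSZ.trans hZX, rfl⟩
    have hC : componentUnion (baseFam F S) (X \ S) ∈ componentUnions (baseFam F S) :=
      ⟨_, hXS, rfl⟩
    have hZX' : Z \ S ⊆ componentUnion (baseFam F S) (X \ S) :=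
      (sdiff_subset_sdiff hZX.subset subset_rfl).trans (self_subset_componentUnion hXS)
    exact hVW ((eq_of_mem_componentUnions hV hC hxV (hZX' hxZ)).trans
      (eq_of_mem_componentUnions hC hW (hZX' hyZ) hyW))
  exact (isMergeAlong_baseFam_union_powerset hSZ hZ).componentUnions_eq hV hW hZVW
    (not_disjoint_iff.2 ⟨x, hxZ, hxV⟩) (not_disjoint_iff.2 ⟨y, hyZ, hyW⟩)

/-- Theorem (update of the reduced family at `S` under a legal merge `merge(S,x,y)`):
if `V, W` are the (distinct) members of `R(F;S)` containing `x` and `y` respectively,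
then `R(G';S)` is obtained from `R(F;S)` by merging `V` and `W` into the single set
`V ∪ W`. -/
theorem merge_updates_reduced_family (F : Finset (Finset A))
    (hdc : DownwardClosed F) (hF : Decomposable F)
    (S : Finset A) (x y : A) (hx : x ∉ S) (hy : y ∉ S) (hxy : x ≠ y)
    (V W : Finset A) (hV : V ∈ reducedFamily F S) (hW : W ∈ reducedFamily F S)
    (hVW : V ≠ W) (hxV : x ∈ V) (hyW : y ∈ W)
    (G' : Finset (Finset A)) (hG' : G' = F ∪ (insert x (insert y S)).powerset)
    (hlegal : Decomposable G') :
    reducedFamily G' S = insert (V ∪ W) (reducedFamily F S \ {V, W}) :=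
  merge_updates_reduced_family_general F S x y hx hy V W hV hW hVW hxV hyW G' hG'
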